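/- arXiv:0902.4726 — 3 statements merged into one kernel-verified Lean document; each statement's English description precedes it below -/
import Mathlib

section
/- Let Y be a complete holomorphic vector field on ℂ² with flow φ, and let f : ℂ² → ℂ be holomorphic such that f·Y is also complete. If z ∈ ℂ² is a point with Y(z) ≠ 0, then t ↦ f(φ(t,z)) is an affine function of t, i.e. there exist a, b ∈ ℂ with f(φ(t,z)) = a t + b for all t ∈ ℂ. Consequently Y(Y f) = 0 on ℂ². -/
/-!
Restricted to a trajectory `t ↦ φ t z` of `Y`, the field `f • Y` becomes the vector field
`g(t) ∂/∂t` on `ℂ` with `g t = f (φ t z)`, and it is still complete: by uniqueness of solutions,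
a trajectory `ψ` of `f • Y` is the time change `t ↦ φ (H t) z` with `H' = f ∘ ψ`. A complete
holomorphic vector field `g` on `ℂ` is affine: its time-`t` maps are injective, and they are
entire (a local inverse of a trajectory straightens the flow away from the zeros of `g`; at a
zero, Gronwall gives continuity and the singularity is removable). An injective entire function
`u` stays away from `u 0` near `∞`, so `1 / (u (1 / z) - u 0)` has a removable singularity at `0`,
`u` has polynomial growth and is a polynomial, and injective polynomials have degree one.
Differentiating the affine time-`t` maps at `t = 0` shows that `g` is affine. Finally `Y f` at
`φ t z` is the `t`-derivative of the affine function `f (φ t z)`, hence constant along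
trajectories, so `Y (Y f) = 0`.
-/

open Complex Metric Set Filter Topology
open scoped NNReal
open Bornology (cobounded)

section Lipschitz

variable {E F : Type*} [NormedAddCommGroup E] [NormedSpace ℂ E]
  [NormedAddCommGroup F] [NormedSpace ℂ F]

theorem norm_fderiv_le_of_forall_mem_closedBall_norm_le {f : E → F} {p : E} {r M : ℝ}
    (hr : 0 < r) (hf : DifferentiableOn ℂ f (closedBall p r))
    (hM : ∀ y ∈ closedBall p r, ‖f y‖ ≤ M) : ‖fderiv ℂ f p‖ ≤ M / r := by
  have hM₀ : 0 ≤ M := (norm_nonneg _).trans (hM p (mem_closedBall_self hr.le))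
  refine ContinuousLinearMap.opNorm_le_bound' _ (by positivity) fun v hv => ?_
  have hv₀ : 0 < ‖v‖ := (norm_nonneg v).lt_of_ne' hv
  set u : ℂ → F := fun ζ => f (p + ζ • v)
  have hmaps : MapsTo (fun ζ : ℂ => p + ζ • v) (closedBall 0 (r / ‖v‖)) (closedBall p r) := by
    intro ζ hζ
    rw [mem_closedBall, dist_zero_right, le_div_iff₀ hv₀] at hζ
    rwa [mem_closedBall, dist_self_add_left, norm_smul]
  have hu : DiffContOnCl ℂ u (ball 0 (r / ‖v‖)) := by
    refine DifferentiableOn.diffContOnCl ?_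
    rw [closure_ball _ (div_pos hr hv₀).ne']
    exact hf.comp ((differentiable_id.smul_const v).const_add p).differentiableOn hmaps
  have hderiv : deriv u 0 = fderiv ℂ f p v := by
    have hfp : HasFDerivAt f (fderiv ℂ f p) (p + (0 : ℂ) • v) := by
      rw [zero_smul, add_zero]
      exact (hf.differentiableAt (closedBall_mem_nhds p hr)).hasFDerivAt
    have hline : HasDerivAt (fun ζ : ℂ => p + ζ • v) v 0 := by
      simpa using ((hasDerivAt_id (0 : ℂ)).smul_const v).const_add p
    exact (hfp.comp_hasDerivAt (0 : ℂ) hline).deriv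
  rw [← hderiv]
  calc ‖deriv u 0‖ ≤ M / (r / ‖v‖) := norm_deriv_le_of_forall_mem_sphere_norm_le
        (by positivity) hu fun ζ hζ => hM _ (hmaps (sphere_subset_closedBall hζ))
    _ = M / r * ‖v‖ := by field_simp

theorem Differentiable.locallyLipschitz {f : E → F} (hf : Differentiable ℂ f) :
    LocallyLipschitz f := by
  intro x
  obtain ⟨δ, hδ, hbound⟩ := Metric.eventually_nhds_iff_ball.mp
    (hf.continuous.continuousAt.norm.eventually (gt_mem_nhds (lt_add_one ‖f x‖)))
  set M := ‖f x‖ + 1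
  refine ⟨(M / (δ / 4)).toNNReal, ball x (δ / 2), ball_mem_nhds x (by positivity), ?_⟩
  refine (convex_ball x (δ / 2)).lipschitzOnWith_of_nnnorm_fderiv_le
    (fun y _ => hf.differentiableAt) fun p hp => ?_
  rw [← NNReal.coe_le_coe, coe_nnnorm, Real.coe_toNNReal _ (by positivity)]
  refine norm_fderiv_le_of_forall_mem_closedBall_norm_le (by positivity) hf.differentiableOn
    fun y hy => (hbound y ?_).le
  rw [mem_ball] at hp ⊢
  rw [mem_closedBall] at hy
  linarith [dist_triangle y p x]

end Lipschitz

section Uniqueness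

variable {E : Type*} [NormedAddCommGroup E] [NormedSpace ℂ E] {V : E → E}

theorem HasDerivAt.comp_ofReal_mul {x : ℂ → E} {x' : E} {s : ℝ} {t : ℂ}
    (h : HasDerivAt x x' (s * t)) : HasDerivAt (fun s : ℝ => x (s * t)) (t • x') s :=
  h.scomp s (by simpa using (ofRealCLM.hasDerivAt (x := s)).mul_const t)

theorem ODE_solution_unique_smul_of_locallyLipschitz (hV : LocallyLipschitz V) {β : ℝ → ℂ}
    (hβ : Continuous β) {y₁ y₂ : ℝ → E} (h₁ : ∀ s, HasDerivAt y₁ (β s • V (y₁ s)) s)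
    (h₂ : ∀ s, HasDerivAt y₂ (β s • V (y₂ s)) s) {s₀ : ℝ} (h₀ : y₁ s₀ = y₂ s₀) : y₁ = y₂ := by
  have hclosed : IsClosed {s | y₁ s = y₂ s} :=
    isClosed_eq (continuous_iff_continuousAt.2 fun s => (h₁ s).continuousAt)
      (continuous_iff_continuousAt.2 fun s => (h₂ s).continuousAt)
  have hopen : IsOpen {s | y₁ s = y₂ s} := by
    refine isOpen_iff_mem_nhds.2 fun s hs => ?_
    obtain ⟨K, U, hU, hK⟩ := hV (y₁ s)
    have hβs : ∀ᶠ σ in 𝓝 s, ‖β σ‖₊ ≤ ‖β s‖₊ + 1 :=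
      hβ.continuousAt.nnnorm.eventually (ge_mem_nhds (lt_add_one _))
    have hy₁ : ∀ᶠ σ in 𝓝 s, y₁ σ ∈ U := (h₁ s).continuousAt.preimage_mem_nhds hU
    have hy₂ : ∀ᶠ σ in 𝓝 s, y₂ σ ∈ U :=
      (h₂ s).continuousAt.preimage_mem_nhds (by rwa [← show y₁ s = y₂ s from hs])
    refine ODE_solution_unique_of_eventually (K := (‖β s‖₊ + 1) * K)
      (v := fun σ x => β σ • V x) (s := fun _ => U) ?_
      ((Eventually.of_forall h₁).and hy₁) ((Eventually.of_forall h₂).and hy₂) hs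
    filter_upwards [hβs] with σ hσ
    exact ((lipschitzWith_smul (β σ)).comp_lipschitzOnWith hK).weaken (by gcongr)
  have huniv := IsClopen.eq_univ ⟨hclosed, hopen⟩ ⟨s₀, h₀⟩
  exact funext (eq_univ_iff_forall.1 huniv)

theorem ODE_solution_unique_complex_smul_of_locallyLipschitz (hV : LocallyLipschitz V)
    {α : ℂ → ℂ} (hα : Continuous α) {x₁ x₂ : ℂ → E} (h₁ : ∀ t, HasDerivAt x₁ (α t • V (x₁ t)) t)
    (h₂ : ∀ t, HasDerivAt x₂ (α t • V (x₂ t)) t) (h₀ : x₁ 0 = x₂ 0) : x₁ = x₂ := by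
  funext t
  have hray : ∀ x : ℂ → E, (∀ t, HasDerivAt x (α t • V (x t)) t) →
      ∀ s : ℝ, HasDerivAt (fun s : ℝ => x (s * t)) ((t * α (s * t)) • V (x (s * t))) s :=
    fun x hx s => by rw [← smul_smul]; exact (hx _).comp_ofReal_mul
  have := ODE_solution_unique_smul_of_locallyLipschitz hV (by fun_prop) (hray x₁ h₁)
    (hray x₂ h₂) (s₀ := 0) (by simpa using h₀)
  simpa using congrFun this 1

end Uniqueness

theorem dist_le_of_trajectory_of_lipschitzOnWith_closedBall {F : Type*} [NormedAddCommGroup F]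
    [NormedSpace ℝ F] {w : F → F} {c : F} {r T : ℝ} {K : ℝ≥0}
    (hw : LipschitzOnWith K w (closedBall c r)) (hc : w c = 0) {y : ℝ → F}
    (hy : ∀ s, HasDerivAt y (w (y s)) s) (hy₀ : dist (y 0) c * Real.exp (K * T) < r) :
    ∀ s ∈ Icc 0 T, dist (y s) c ≤ dist (y 0) c * Real.exp (K * s) := by
  set d := dist (y 0) c
  have hr : 0 ≤ r := (mul_nonneg dist_nonneg (Real.exp_pos _).le).trans hy₀.le
  have hcont : Continuous y := continuous_iff_continuousAt.2 fun s => (hy s).continuousAt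
  have gronwall : ∀ b, (∀ σ ∈ Ico 0 b, y σ ∈ closedBall c r) →
      ∀ s ∈ Icc 0 b, dist (y s) c ≤ d * Real.exp (K * s) := fun b hb s hs => by
    simpa using dist_le_of_trajectories_ODE_of_mem (v := fun _ => w) (g := fun _ => c)
      (fun _ _ => hw) hcont.continuousOn (fun σ _ => (hy σ).hasDerivWithinAt) hb
      continuousOn_const (fun σ _ => by simpa [hc] using hasDerivWithinAt_const σ _ c)
      (fun _ _ => mem_closedBall_self hr) le_rfl s hs
  -- `y` cannot leave the ball: at the first exit time Gronwall's bound still keeps it inside.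
  have hstay : ∀ s ∈ Icc 0 T, dist (y s) c < r := by
    by_contra! hexit
    set S := Icc 0 T ∩ {s | r ≤ dist (y s) c}
    have hS : IsClosed S := isClosed_Icc.inter (isClosed_le continuous_const (by fun_prop))
    obtain ⟨s, hs, hrs⟩ := hexit
    have hτ : sInf S ∈ S := hS.csInf_mem ⟨s, hs, hrs⟩ ⟨0, fun σ hσ => hσ.1.1⟩
    have hbefore : ∀ σ ∈ Ico 0 (sInf S), y σ ∈ closedBall c r := fun σ hσ => by
      have : σ ∉ S := notMem_of_lt_csInf hσ.2 ⟨0, fun σ hσ => hσ.1.1⟩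
      exact mem_closedBall.2 (not_le.1 fun h => this ⟨⟨hσ.1, hσ.2.le.trans hτ.1.2⟩, h⟩).le
    have hexp : d * Real.exp (K * sInf S) ≤ d * Real.exp (K * T) := by gcongr; exact hτ.1.2
    have hτr : r ≤ dist (y (sInf S)) c := hτ.2
    linarith [gronwall _ hbefore _ ⟨hτ.1.1, le_rfl⟩]
  exact gronwall T fun σ hσ => (hstay σ ⟨hσ.1, hσ.2.le⟩).le

structure IsFlow {E : Type*} [NormedAddCommGroup E] [NormedSpace ℂ E]
    (v : E → E) (φ : ℂ → E → E) : Prop where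
  zero : ∀ z, φ 0 z = z
  hasDerivAt : ∀ t z, HasDerivAt (fun s => φ s z) (v (φ t z)) t

namespace IsFlow

variable {E : Type*} [NormedAddCommGroup E] [NormedSpace ℂ E] {v : E → E} {φ : ℂ → E → E}

theorem differentiable_trajectory (hφ : IsFlow v φ) (z : E) : Differentiable ℂ fun t => φ t z :=
  fun t => (hφ.hasDerivAt t z).differentiableAt

theorem hasDerivAt_comp {G : Type*} [NormedAddCommGroup G] [NormedSpace ℂ G]
    (hφ : IsFlow v φ) {f : E → G} (hf : Differentiable ℂ f) (t : ℂ) (z : E) :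
    HasDerivAt (fun s => f (φ s z)) (fderiv ℂ f (φ t z) (v (φ t z))) t :=
  (hf _).hasFDerivAt.comp_hasDerivAt t (hφ.hasDerivAt t z)

theorem fderiv_apply_eq_zero_of_forall_eq {G : Type*} [NormedAddCommGroup G] [NormedSpace ℂ G]
    (hφ : IsFlow v φ) {F : E → G} {w : E} (hF : DifferentiableAt ℂ F w)
    (hconst : ∀ t, F (φ t w) = F w) : fderiv ℂ F w (v w) = 0 := by
  have h := hF.hasFDerivAt.comp_hasDerivAt_of_eq 0 (hφ.hasDerivAt 0 w) (hφ.zero w).symm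
  rw [hφ.zero] at h
  exact h.unique (by simpa [Function.comp_def, hconst] using hasDerivAt_const 0 (F w))

variable (hv : LocallyLipschitz v)
include hv

theorem eq_of_hasDerivAt (hφ : IsFlow v φ) {γ : ℂ → E} {z : E} (hγ₀ : γ 0 = z)
    (hγ : ∀ t, HasDerivAt γ (v (γ t)) t) : γ = fun t => φ t z :=
  ODE_solution_unique_complex_smul_of_locallyLipschitz hv (α := 1) continuous_const
    (by simpa using hγ) (by simpa using fun t => hφ.hasDerivAt t z) (by rw [hγ₀, hφ.zero])

theorem add_apply (hφ : IsFlow v φ) (s t : ℂ) (z : E) : φ (s + t) z = φ s (φ t z) := by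
  refine congrFun (hφ.eq_of_hasDerivAt hv (γ := fun s => φ (s + t) z) (by simp) fun s => ?_) s
  simpa using (hφ.hasDerivAt (s + t) z).comp_add_const s t

theorem neg_apply_apply (hφ : IsFlow v φ) (t : ℂ) (z : E) : φ (-t) (φ t z) = z := by
  rw [← hφ.add_apply hv, neg_add_cancel, hφ.zero]

theorem injective (hφ : IsFlow v φ) (t : ℂ) : Function.Injective (φ t) :=
  Function.LeftInverse.injective (hφ.neg_apply_apply hv t)

theorem apply_eq_self_of_eq_zero (hφ : IsFlow v φ) {z : E} (hz : v z = 0) (t : ℂ) :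
    φ t z = z :=
  (congrFun (hφ.eq_of_hasDerivAt hv (γ := fun _ => z) rfl fun s => by
    simpa [hz] using hasDerivAt_const s z) t).symm

theorem continuousAt_of_eq_zero (hφ : IsFlow v φ) {z : E} (hz : v z = 0) (t : ℂ) :
    ContinuousAt (φ t) z := by
  obtain ⟨K, U, hU, hK⟩ := hv z
  obtain ⟨r, hr, hrU⟩ := nhds_basis_closedBall.mem_iff.1 hU
  set L := ‖t‖₊ * K
  have hw : LipschitzOnWith L (fun x => t • v x) (closedBall z r) :=
    (lipschitzWith_smul t).comp_lipschitzOnWith (hK.mono hrU)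
  refine continuousAt_of_locally_lipschitz (div_pos hr (Real.exp_pos L)) (Real.exp L)
    fun c hc => ?_
  have hray : ∀ s : ℝ, HasDerivAt (fun s : ℝ => φ (s * t) c) (t • v (φ (s * t) c)) s :=
    fun s => (hφ.hasDerivAt _ c).comp_ofReal_mul
  have := dist_le_of_trajectory_of_lipschitzOnWith_closedBall hw (by simp [hz]) hray (T := 1)
    (by simpa [hφ.zero, lt_div_iff₀ (Real.exp_pos _)] using hc) 1 ⟨zero_le_one, le_rfl⟩
  rw [hφ.apply_eq_self_of_eq_zero hv hz]
  simpa [hφ.zero, mul_comm] using this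

theorem exists_hasDerivAt_time_change (hφ : IsFlow v φ) {f : E → ℂ} (hf : Differentiable ℂ f)
    {ψ : ℂ → E} {z : E} {c : ℂ} (hψ₀ : ψ 0 = φ c z)
    (hψ : ∀ t, HasDerivAt ψ (f (ψ t) • v (ψ t)) t) :
    ∃ H : ℂ → ℂ, H 0 = c ∧ ∀ t, HasDerivAt H (f (φ (H t) z)) t := by
  have hα : Differentiable ℂ fun t => f (ψ t) := hf.comp fun t => (hψ t).differentiableAt
  obtain ⟨H, hH₀, hH⟩ := hα.isExactOn_univ.with_val_at 0 c
  have hHψ : (fun t => φ (H t) z) = ψ :=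
    ODE_solution_unique_complex_smul_of_locallyLipschitz hv hα.continuous
      (fun t => (hφ.hasDerivAt (H t) z).scomp t (hH t (mem_univ t))) hψ (by simp [hH₀, hψ₀])
  exact ⟨H, hH₀, fun t => by simpa [congrFun hHψ t] using hH t (mem_univ t)⟩

end IsFlow

theorem AnalyticAt.exists_pow_le_norm {𝕜 E : Type*} [NontriviallyNormedField 𝕜]
    [NormedAddCommGroup E] [NormedSpace 𝕜 E] {F : 𝕜 → E} {z₀ : 𝕜} (hF : AnalyticAt 𝕜 F z₀)
    (hne : ¬∀ᶠ z in 𝓝 z₀, F z = 0) :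
    ∃ m : ℕ, ∃ c > 0, ∀ᶠ z in 𝓝 z₀, c * ‖z - z₀‖ ^ m ≤ ‖F z‖ := by
  obtain ⟨m, hm⟩ := WithTop.ne_top_iff_exists.1 fun h => hne (analyticOrderAt_eq_top.1 h)
  obtain ⟨k, hk, hk₀, hFk⟩ := hF.analyticOrderAt_eq_natCast.1 hm.symm
  have hk₀' : 0 < ‖k z₀‖ := norm_pos_iff.2 hk₀
  refine ⟨m, ‖k z₀‖ / 2, by positivity, ?_⟩
  filter_upwards [hFk, hk.continuousAt.norm.eventually (lt_mem_nhds (half_lt_self hk₀'))]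
    with z hz hkz
  rw [hz, norm_smul, norm_pow, mul_comm]
  gcongr

namespace Differentiable

theorem eventually_le_norm_sub_of_injective {u : ℂ → ℂ} (hu : Differentiable ℂ u)
    (hinj : Function.Injective u) : ∃ ε > 0, ∀ᶠ z in cobounded ℂ, ε ≤ ‖u z - u 0‖ := by
  rcases (hu.analyticAt 0).eventually_constant_or_nhds_le_map_nhds with hconst | hopen
  · obtain ⟨z, hz, hz₀⟩ := ((hconst.filter_mono nhdsWithin_le_nhds).and
      (self_mem_nhdsWithin (s := {(0 : ℂ)}ᶜ))).exists
    exact absurd (hinj hz) hz₀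
  obtain ⟨ε, hε, hball⟩ := Metric.mem_nhds_iff.1
    (hopen (image_mem_map (ball_mem_nhds (0 : ℂ) one_pos)))
  refine ⟨ε, hε, (eventually_cobounded_le_norm 1).mono fun z hz => not_lt.1 fun hlt => ?_⟩
  obtain ⟨z', hz', hzz'⟩ := hball (mem_ball_iff_norm.2 hlt)
  rw [hinj hzz', mem_ball_zero_iff] at hz'
  linarith

theorem exists_norm_sub_le_pow {u : ℂ → ℂ} (hu : Differentiable ℂ u) {a : ℂ} {ε : ℝ}
    (hε : 0 < ε) (hgap : ∀ᶠ z in cobounded ℂ, ε ≤ ‖u z - a‖) :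
    ∃ m : ℕ, ∃ C, ∀ᶠ z in cobounded ℂ, ‖u z - a‖ ≤ C * ‖z‖ ^ m := by
  set q : ℂ → ℂ := fun z => (u z⁻¹ - a)⁻¹
  have hgap' : ∀ᶠ z in 𝓝[≠] 0, ε ≤ ‖u z⁻¹ - a‖ := tendsto_inv₀_nhdsNE_zero.eventually hgap
  obtain ⟨δ, hδ, hδgap⟩ := Metric.eventually_nhds_iff_ball.1 (eventually_nhdsWithin_iff.1 hgap')
  have hq : ∀ z ∈ ball (0 : ℂ) δ \ {0}, u z⁻¹ - a ≠ 0 := fun z hz =>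
    norm_pos_iff.1 (hε.trans_le (hδgap z hz.1 hz.2))
  -- `q` is bounded by `ε⁻¹` near `0`, so its singularity there is removable
  have hQ := differentiableOn_update_limUnder_of_bddAbove (f := q) (ball_mem_nhds 0 hδ)
    (fun z hz => (((hu _).comp z (differentiableAt_inv (by simpa using hz.2))).sub_const a
      |>.inv (hq z hz)).differentiableWithinAt)
    ⟨ε⁻¹, by
      rintro _ ⟨z, hz, rfl⟩
      simpa [q] using inv_anti₀ hε (hδgap z hz.1 hz.2)⟩
  set Q := Function.update q 0 (limUnder (𝓝[≠] 0) q)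
  have hQq : ∀ᶠ z in 𝓝[≠] 0, Q z = q z :=
    eventually_mem_nhdsWithin.mono fun z hz => Function.update_of_ne hz _ _
  have hq₀ : ∀ᶠ z in 𝓝[≠] 0, q z ≠ 0 := eventually_nhdsWithin_iff.2
    (Metric.eventually_nhds_iff_ball.2 ⟨δ, hδ, fun z hz hz₀ => inv_ne_zero (hq z ⟨hz, hz₀⟩)⟩)
  have hQ₀ : ¬∀ᶠ z in 𝓝 0, Q z = 0 := fun h => by
    obtain ⟨z, hQz, hqQ, hz⟩ := ((h.filter_mono nhdsWithin_le_nhds).and (hQq.and hq₀)).exists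
    exact hz (hqQ.symm.trans hQz)
  obtain ⟨m, c, hc, hlow⟩ := (hQ.analyticAt (ball_mem_nhds 0 hδ)).exists_pow_le_norm hQ₀
  refine ⟨m, c⁻¹, ?_⟩
  filter_upwards [tendsto_inv₀_cobounded'.eventually ((hlow.filter_mono nhdsWithin_le_nhds).and
    hQq), hgap, eventually_cobounded_le_norm 1] with w ⟨hlow, hQ⟩ hw hw₁
  simp only [hQ, q, inv_inv, sub_zero, norm_inv] at hlow
  have hw₀ : 0 < ‖w‖ := one_pos.trans_le hw₁
  have := (le_inv_comm₀ (by positivity) (hε.trans_le hw)).1 hlow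
  rwa [mul_inv, inv_pow, inv_inv] at this

theorem iteratedDeriv_eq_zero_of_norm_le_pow {F : Type*} [NormedAddCommGroup F]
    [NormedSpace ℂ F] [CompleteSpace F] {u : ℂ → F} (hu : Differentiable ℂ u) {m : ℕ} {C : ℝ}
    (hb : ∀ᶠ z in cobounded ℂ, ‖u z‖ ≤ C * ‖z‖ ^ m) {n : ℕ} (hn : m < n) :
    iteratedDeriv n u 0 = 0 := by
  rw [← comap_norm_atTop] at hb
  obtain ⟨R₀, hR₀⟩ := eventually_atTop.1 (eventually_comap.1 hb)
  have hcauchy : ∀ᶠ R in atTop, ‖iteratedDeriv n u 0‖ ≤ n.factorial * (C * R ^ m) / R ^ n := by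
    filter_upwards [eventually_ge_atTop R₀, eventually_gt_atTop 0] with R hR hRpos
    refine norm_iteratedDeriv_le_of_forall_mem_sphere_norm_le n hRpos hu.diffContOnCl
      fun z hz => ?_
    rw [mem_sphere_zero_iff_norm] at hz
    exact hz ▸ hR₀ R hR z hz
  have hlim : Tendsto (fun R : ℝ => n.factorial * (C * R ^ m) / R ^ n) atTop (𝓝 0) := by
    simpa [mul_div_assoc, mul_assoc] using
      ((Asymptotics.isLittleO_pow_pow_atTop_of_lt hn).tendsto_div_nhds_zero.const_mul
        (n.factorial * C))
  exact norm_le_zero_iff.1 (ge_of_tendsto hlim hcauchy)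

open Polynomial in
theorem exists_polynomial_of_norm_le_pow {u : ℂ → ℂ} (hu : Differentiable ℂ u) {m : ℕ} {C : ℝ}
    (hb : ∀ᶠ z in cobounded ℂ, ‖u z‖ ≤ C * ‖z‖ ^ m) : ∃ p : ℂ[X], ∀ z, u z = p.eval z := by
  refine ⟨∑ n ∈ Finset.range (m + 1),
    Polynomial.C ((n.factorial : ℂ)⁻¹ * iteratedDeriv n u 0) * X ^ n, fun z => ?_⟩
  have htaylor := hasSum_taylorSeries_of_entire hu 0 z
  rw [htaylor.unique (hasSum_sum_of_ne_finset_zero (s := Finset.range (m + 1)) fun n hn => ?_)]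
  · simp [eval_finsetSum, mul_comm, mul_left_comm]
  · rw [hu.iteratedDeriv_eq_zero_of_norm_le_pow hb (by simpa using hn), smul_zero, smul_zero]

end Differentiable

open Polynomial in
theorem Polynomial.natDegree_le_one_of_injective {p : ℂ[X]} (hp : Function.Injective p.eval) :
    p.natDegree ≤ 1 := by
  by_contra! hn
  set q := p - Polynomial.C (p.eval 0)
  have hroots : q.roots = Multiset.replicate p.natDegree 0 := by
    refine Multiset.eq_replicate.2 ⟨?_, fun r hr => hp ?_⟩
    · rw [IsAlgClosed.card_roots_eq_natDegree, natDegree_sub_C]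
    · simpa [q, sub_eq_zero] using (mem_roots'.1 hr).2
  -- `q` vanishes only at `0`, so it is a monomial, which takes equal values at all roots of unity
  have hq : q = Polynomial.C q.leadingCoeff * X ^ p.natDegree := by
    conv_lhs => rw [← C_leadingCoeff_mul_prod_multiset_X_sub_C (p := q)
      IsAlgClosed.card_roots_eq_natDegree]
    simp [hroots]
  have hζ := isPrimitiveRoot_exp p.natDegree (by omega)
  refine hζ.ne_one hn (hp ?_)
  have : q.eval (cexp (2 * Real.pi * I / p.natDegree)) = q.eval 1 := by
    rw [hq]
    simp [hζ.pow_eq_one]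
  simpa [q] using this

theorem Differentiable.exists_affine_of_injective {u : ℂ → ℂ} (hu : Differentiable ℂ u)
    (hinj : Function.Injective u) : ∃ a b : ℂ, ∀ z, u z = a * z + b := by
  obtain ⟨ε, hε, hgap⟩ := hu.eventually_le_norm_sub_of_injective hinj
  obtain ⟨m, C, hC⟩ := hu.exists_norm_sub_le_pow hε hgap
  obtain ⟨p, hp⟩ := (hu.sub_const (u 0)).exists_polynomial_of_norm_le_pow hC
  set p' := p + Polynomial.C (u 0)
  have hp' : ∀ z, u z = p'.eval z := fun z => by simp [p', ← hp]
  have hdeg := Polynomial.natDegree_le_one_of_injective (p := p')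
    (by rwa [show p'.eval = u from funext fun z => (hp' z).symm])
  refine ⟨p'.coeff 1, p'.coeff 0, fun z => ?_⟩
  rw [hp', Polynomial.eq_X_add_C_of_natDegree_le_one hdeg]
  simp

namespace IsFlow

variable {g : ℂ → ℂ} {φ : ℂ → ℂ → ℂ}

theorem exists_localInverse_trajectory (hφ : IsFlow g φ) {p : ℂ} (hp : g p ≠ 0) :
    ∃ H : ℂ → ℂ, DifferentiableAt ℂ H p ∧ ∀ᶠ c in 𝓝 p, φ (H c) p = c := by
  have hstrict : HasStrictDerivAt (fun s => φ s p) (g p) 0 := by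
    simpa [(hφ.hasDerivAt 0 p).deriv, hφ.zero] using
      ((hφ.differentiable_trajectory p).analyticAt 0).hasStrictDerivAt
  refine ⟨hstrict.localInverse _ _ _ hp, ?_, ?_⟩
  · simpa [hφ.zero] using (hstrict.to_localInverse hp).hasDerivAt.differentiableAt
  · simpa [hφ.zero] using hstrict.eventually_right_inverse hp

theorem differentiableAt_of_ne_zero (hφ : IsFlow g φ) (hg : LocallyLipschitz g) {p : ℂ}
    (hp : g p ≠ 0) (t : ℂ) : DifferentiableAt ℂ (φ t) p := by
  obtain ⟨H, hH, hHp⟩ := hφ.exists_localInverse_trajectory hp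
  have hloc : φ t =ᶠ[𝓝 p] fun c => φ (t + H c) p :=
    hHp.mono fun c hc => by dsimp only; rw [hφ.add_apply hg, hc]
  exact ((hφ.differentiable_trajectory p _).comp p (hH.const_add t)).congr_of_eventuallyEq hloc

theorem differentiable (hφ : IsFlow g φ) (hg : Differentiable ℂ g) (t : ℂ) :
    Differentiable ℂ (φ t) := by
  intro c
  by_cases hc : g c = 0
  · rcases (hg.analyticAt c).eventually_eq_zero_or_eventually_ne_zero with hzero | hne
    · exact differentiableAt_id.congr_of_eventuallyEq
        (hzero.mono fun z hz => hφ.apply_eq_self_of_eq_zero hg.locallyLipschitz hz t)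
    · exact (analyticAt_of_differentiable_on_punctured_nhds_of_continuousAt
        (hne.mono fun z hz => hφ.differentiableAt_of_ne_zero hg.locallyLipschitz hz t)
        (hφ.continuousAt_of_eq_zero hg.locallyLipschitz hc t)).differentiableAt
  · exact hφ.differentiableAt_of_ne_zero hg.locallyLipschitz hc t

theorem exists_affine (hφ : IsFlow g φ) (hg : Differentiable ℂ g) :
    ∃ a b : ℂ, ∀ c, g c = a * c + b := by
  have hlin : ∀ t c, φ t c = (φ t 1 - φ t 0) * c + φ t 0 := fun t c => by
    obtain ⟨A, B, hAB⟩ := (hφ.differentiable hg t).exists_affine_of_injective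
      (hφ.injective hg.locallyLipschitz t)
    rw [hAB, hAB 1, hAB 0]
    ring
  have hderiv : ∀ c, HasDerivAt (fun s => φ s c) (g c) 0 := fun c => by
    simpa [hφ.zero] using hφ.hasDerivAt 0 c
  refine ⟨g 1 - g 0, g 0, fun c => (hderiv c).unique ?_⟩
  exact ((((hderiv 1).sub (hderiv 0)).mul_const c).add (hderiv 0)).congr_of_eventuallyEq
    (Eventually.of_forall fun s => hlin s c)

end IsFlow

theorem second_integral_affine_along_flow_general
    (Y : ℂ × ℂ → ℂ × ℂ) (f : ℂ × ℂ → ℂ)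
    (hY : Differentiable ℂ Y) (hf : Differentiable ℂ f)
    (φ : ℂ → ℂ × ℂ → ℂ × ℂ)
    (hφ0 : ∀ z, φ 0 z = z)
    (hφode : ∀ t z, HasDerivAt (fun s => φ s z) (Y (φ t z)) t)
    (hfYcomplete : ∀ z : ℂ × ℂ, ∃ ψ : ℂ → ℂ × ℂ, ψ 0 = z ∧
      ∀ t, HasDerivAt ψ (f (ψ t) • Y (ψ t)) t) :
    (∀ z : ℂ × ℂ, Y z ≠ 0 → ∃ a b : ℂ, ∀ t : ℂ, f (φ t z) = a * t + b) ∧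
    (∀ w : ℂ × ℂ, fderiv ℂ (fun z => fderiv ℂ f z (Y z)) w (Y w) = 0) := by
  have hφ : IsFlow Y φ := ⟨hφ0, hφode⟩
  have haffine : ∀ z, ∃ a b : ℂ, ∀ t, f (φ t z) = a * t + b := fun z => by
    choose H hH₀ hH using fun c =>
      have ⟨ψ, hψ₀, hψ⟩ := hfYcomplete (φ c z)
      hφ.exists_hasDerivAt_time_change hY.locallyLipschitz hf hψ₀ hψ
    have hflow : IsFlow (fun t => f (φ t z)) fun t c => H c t := ⟨hH₀, fun t c => hH c t⟩
    exact hflow.exists_affine (hf.comp (hφ.differentiable_trajectory z))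
  refine ⟨fun z _ => haffine z, fun w => ?_⟩
  by_cases hd : DifferentiableAt ℂ (fun z => fderiv ℂ f z (Y z)) w
  · obtain ⟨a, b, hab⟩ := haffine w
    have hYf : ∀ t, fderiv ℂ f (φ t w) (Y (φ t w)) = a := fun t =>
      (hφ.hasDerivAt_comp hf t w).unique (by
        simpa [funext hab] using ((hasDerivAt_id t).const_mul a).add_const b)
    exact hφ.fderiv_apply_eq_zero_of_forall_eq hd fun t => by rw [hYf, ← hφ.zero w, hYf]
  · rw [fderiv_zero_of_not_differentiableAt hd]
    rfl

/-- If `Y` is a complete holomorphic vector field on `ℂ²` with flow `φ`, and `f` is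
holomorphic with `f·Y` also complete, then along every trajectory of `Y` through a point
`z` with `Y z ≠ 0` the function `f` is affine in the time parameter; consequently
`Y(Yf) = 0` on `ℂ²`. -/
theorem second_integral_affine_along_flow
    (Y : ℂ × ℂ → ℂ × ℂ) (f : ℂ × ℂ → ℂ)
    (hY : Differentiable ℂ Y) (hf : Differentiable ℂ f)
    (φ : ℂ → ℂ × ℂ → ℂ × ℂ)
    (hφ0 : ∀ z, φ 0 z = z)
    (hφgroup : ∀ s t z, φ (s + t) z = φ s (φ t z))
    (hφode : ∀ t z, HasDerivAt (fun s => φ s z) (Y (φ t z)) t)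
    (hfYcomplete : ∀ z : ℂ × ℂ, ∃ ψ : ℂ → ℂ × ℂ, ψ 0 = z ∧
      ∀ t, HasDerivAt ψ (f (ψ t) • Y (ψ t)) t) :
    (∀ z : ℂ × ℂ, Y z ≠ 0 → ∃ a b : ℂ, ∀ t : ℂ, f (φ t z) = a * t + b) ∧
    (∀ w : ℂ × ℂ, fderiv ℂ (fun z => fderiv ℂ f z (Y z)) w (Y w) = 0) :=
  second_integral_affine_along_flow_general Y f hY hf φ hφ0 hφode hfYcomplete
end

section
/- Let Y be a complete holomorphic vector field on ℂ² and f a holomorphic function with f·Y complete. If Yf is a nonzero constant c, then every trajectory of Y through a point where Y ≠ 0 is of type ℂ (the solution map φ_z : ℂ → C_z is injective). -/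
/-!
Along a trajectory of `Y`, the function `t ↦ f (φ t z)` has derivative `(Yf)(φ t z) = c`,
so it is the affine map `t ↦ f z + c t`. Since `c ≠ 0` this map is injective, hence so is
`t ↦ φ t z`.
-/

section ConstantDerivative

variable {𝕜 G : Type*} [RCLike 𝕜] [NormedAddCommGroup G] [NormedSpace 𝕜 G]
  {g : 𝕜 → G} {c : G}

theorem eq_add_smul_of_hasDerivAt_const (hg : ∀ t, HasDerivAt g c t) (s : 𝕜) :
    g s = g 0 + s • c := by
  have hzero : ∀ t, HasDerivAt (fun t => g t - t • c) 0 t := fun t => by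
    have h := (hg t).sub ((hasDerivAt_id t).smul_const c)
    rwa [one_smul, sub_self] at h
  have hconst := is_const_of_deriv_eq_zero (fun t => (hzero t).differentiableAt)
    (fun t => (hzero t).deriv) s 0
  simp only [zero_smul, sub_zero] at hconst
  rw [← hconst, sub_add_cancel]

theorem injective_of_hasDerivAt_const (hg : ∀ t, HasDerivAt g c t) (hc : c ≠ 0) :
    Function.Injective g := by
  intro a b hab
  rw [eq_add_smul_of_hasDerivAt_const hg a, eq_add_smul_of_hasDerivAt_const hg b] at hab
  exact smul_left_injective 𝕜 hc (add_left_cancel hab)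

end ConstantDerivative

theorem trajectories_type_C_of_nonzero_constant_Yf_general
    (Y : ℂ × ℂ → ℂ × ℂ) (f : ℂ × ℂ → ℂ)
    (hf : Differentiable ℂ f)
    (φ : ℂ → ℂ × ℂ → ℂ × ℂ)
    (hφode : ∀ t z, HasDerivAt (fun s => φ s z) (Y (φ t z)) t)
    (c : ℂ) (hc : c ≠ 0)
    (hYf : ∀ w : ℂ × ℂ, fderiv ℂ f w (Y w) = c) :
    ∀ z : ℂ × ℂ, Y z ≠ 0 → Function.Injective (fun t : ℂ => φ t z) := by
  intro z _
  have hf_along : ∀ t, HasDerivAt (fun s => f (φ s z)) c t := fun t => by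
    simpa only [hYf, Function.comp_def] using
      (hf (φ t z)).hasFDerivAt.comp_hasDerivAt t (hφode t z)
  exact (injective_of_hasDerivAt_const hf_along hc).of_comp

/-- If `Y` is complete with flow `φ`, `f·Y` is complete, and `Yf` is a nonzero constant
`c`, then every trajectory of `Y` through a point where `Y ≠ 0` is of type `ℂ`: the
solution map `t ↦ φ t z` is injective. -/
theorem trajectories_type_C_of_nonzero_constant_Yf
    (Y : ℂ × ℂ → ℂ × ℂ) (f : ℂ × ℂ → ℂ)
    (hY : Differentiable ℂ Y) (hf : Differentiable ℂ f)
    (φ : ℂ → ℂ × ℂ → ℂ × ℂ)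
    (hφ0 : ∀ z, φ 0 z = z)
    (hφgroup : ∀ s t z, φ (s + t) z = φ s (φ t z))
    (hφode : ∀ t z, HasDerivAt (fun s => φ s z) (Y (φ t z)) t)
    (hfYcomplete : ∀ z : ℂ × ℂ, ∃ ψ : ℂ → ℂ × ℂ, ψ 0 = z ∧
      ∀ t, HasDerivAt ψ (f (ψ t) • Y (ψ t)) t)
    (c : ℂ) (hc : c ≠ 0)
    (hYf : ∀ w : ℂ × ℂ, fderiv ℂ f w (Y w) = c) :
    ∀ z : ℂ × ℂ, Y z ≠ 0 → Function.Injective (fun t : ℂ => φ t z) :=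
  trajectories_type_C_of_nonzero_constant_Yf_general Y f hf φ hφode c hc hYf
end

section
/- Let X = f·Y be a complete holomorphic vector field on ℂ² where f is holomorphic and Y is holomorphic. If the zero set {f = 0} is nonempty and not invariant under the flow of Y (i.e. some trajectory of Y meets {f = 0} at an isolated point without being contained in it), then every nonconstant trajectory of X through a point near such an intersection omits a value, and X is of type ℂ*: its generic trajectories are isomorphic to ℂ*, not ℂ. -/
/-!
Let `w = φ t₀ z₀` with `f w ≠ 0`. Zeros of `f` are stationary points of `X = f • Y`, so `f` never
vanishes along the `X`-trajectory of `w`. Reparametrising time by a primitive `τ` of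
`s ↦ f (ψ s w)` with `τ 0 = t₀` turns it into a `Y`-trajectory: `ψ s w = φ (τ s) z₀`. Hence the
entire function `τ` omits `0`, while `τ' 0 = f w ≠ 0`. An injective entire function with nonzero
derivative is affine, hence surjective; so `τ` is not injective, and `τ A = τ B` with `A ≠ B`
makes `A - B` a period of `s ↦ ψ s w`.
-/

open Complex Metric Set Filter Function
open scoped Topology

theorem Differentiable.locallyLipschitz_s10 {E F : Type*} [NormedAddCommGroup E] [NormedSpace ℂ E]
    [NormedAddCommGroup F] [NormedSpace ℂ F] {V : E → F} (hV : Differentiable ℂ V) :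
    LocallyLipschitz V := by
  intro p
  obtain ⟨ε, hε, hV1⟩ := Metric.continuousAt_iff.mp (hV p).continuousAt 1 one_pos
  set r := ε / 2
  have hr0 : 0 < r := by positivity
  -- Cauchy's estimate on the complex lines through `x`, where `V` stays within `1` of `V p`
  have hderiv : ∀ x ∈ ball p r, ‖fderiv ℂ V x‖ ≤ r⁻¹ := by
    intro x hx
    refine ContinuousLinearMap.opNorm_le_bound _ (by positivity) fun h => ?_
    rcases eq_or_ne h 0 with rfl | hh
    · simp
    have hR : 0 < r / ‖h‖ := by positivity
    have hline : HasDerivAt (fun z : ℂ => V (x + z • h)) (fderiv ℂ V x h) 0 := by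
      have := ((hasDerivAt_id (0 : ℂ)).smul_const h).const_add x
      simpa [comp_def] using (hV (x + (0 : ℂ) • h)).hasFDerivAt.comp_hasDerivAt 0 this
    have hsphere : ∀ z ∈ sphere (0 : ℂ) (r / ‖h‖), ‖V (x + z • h) - V p‖ ≤ 1 := by
      intro z hz
      rw [mem_sphere_zero_iff_norm] at hz
      rw [← dist_eq_norm]
      refine (hV1 ?_).le
      rw [mem_ball, dist_eq_norm] at hx
      rw [dist_eq_norm]
      calc ‖x + z • h - p‖ ≤ ‖z • h‖ + ‖x - p‖ := by
            rw [add_sub_right_comm, add_comm]; exact norm_add_le _ _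
        _ < r + r := by
            rw [norm_smul, hz, div_mul_cancel₀ _ (norm_ne_zero_iff.mpr hh)]
            linarith
        _ = ε := by ring
    have hdiff : Differentiable ℂ fun z : ℂ => V (x + z • h) := fun z =>
      (hV _).comp z (by fun_prop)
    have := norm_deriv_le_of_forall_mem_sphere_norm_le hR (hdiff.sub_const (V p)).diffContOnCl
      hsphere
    rw [deriv_sub_const, hline.deriv, one_div_div] at this
    calc ‖fderiv ℂ V x h‖ ≤ ‖h‖ / r := this
      _ = r⁻¹ * ‖h‖ := by ring
  refine ⟨r⁻¹.toNNReal, ball p r, ball_mem_nhds p hr0,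
    (convex_ball p r).lipschitzOnWith_of_nnnorm_fderiv_le (fun x _ => hV x) fun x hx => ?_⟩
  rw [← NNReal.coe_le_coe, coe_nnnorm, Real.coe_toNNReal _ (by positivity)]
  exact hderiv x hx

theorem LocallyLipschitz.eventuallyEq_of_hasDerivAt_smul {E : Type*} [NormedAddCommGroup E]
    [NormedSpace ℂ E] {V : E → E} (hV : LocallyLipschitz V) {a : ℝ → ℂ} {t₀ : ℝ}
    (ha : ContinuousAt a t₀) {c₁ c₂ : ℝ → E} (h₁ : ∀ t, HasDerivAt c₁ (a t • V (c₁ t)) t)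
    (h₂ : ∀ t, HasDerivAt c₂ (a t • V (c₂ t)) t) (h : c₁ t₀ = c₂ t₀) : c₁ =ᶠ[𝓝 t₀] c₂ := by
  obtain ⟨K, U, hU, hK⟩ := hV (c₁ t₀)
  have hlip : ∀ᶠ t in 𝓝 t₀, LipschitzOnWith ((‖a t₀‖₊ + 1) * K) (fun x => a t • V x) U := by
    filter_upwards [ha.nnnorm.eventually_lt_const (lt_add_one ‖a t₀‖₊)] with t ht
    refine LipschitzOnWith.of_dist_le_mul fun x hx y hy => ?_
    rw [dist_smul₀, NNReal.coe_mul, mul_assoc]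
    exact mul_le_mul (by exact_mod_cast ht.le) (hK.dist_le_mul x hx y hy) (by positivity)
      (by positivity)
  have hmem : ∀ c : ℝ → E, Continuous c → c t₀ = c₁ t₀ → ∀ᶠ t in 𝓝 t₀, c t ∈ U :=
    fun c hc hc₀ => hc.continuousAt.preimage_mem_nhds (hc₀ ▸ hU)
  refine ODE_solution_unique_of_eventually (s := fun _ => U) hlip ?_ ?_ h
  · exact (hmem c₁ (continuous_iff_continuousAt.mpr fun t => (h₁ t).continuousAt) rfl).mono
      fun t ht => ⟨h₁ t, ht⟩
  · exact (hmem c₂ (continuous_iff_continuousAt.mpr fun t => (h₂ t).continuousAt) h.symm).mono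
      fun t ht => ⟨h₂ t, ht⟩

theorem Differentiable.eq_of_eventuallyEq_ofReal {E : Type*} [NormedAddCommGroup E]
    [NormedSpace ℂ E] [CompleteSpace E] {u v : ℂ → E} (hu : Differentiable ℂ u)
    (hv : Differentiable ℂ v) (h : (fun r : ℝ => u r) =ᶠ[𝓝 0] fun r => v r) : u = v := by
  have hofReal : Tendsto ((↑) : ℝ → ℂ) (𝓝[≠] 0) (𝓝[≠] 0) :=
    tendsto_nhdsWithin_of_tendsto_nhds_of_eventually_within _
      ((continuous_ofReal.tendsto' 0 0 ofReal_zero).mono_left nhdsWithin_le_nhds)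
      (eventually_mem_nhdsWithin.mono fun r hr => ofReal_ne_zero.mpr hr)
  exact (analyticOnNhd_univ_iff_differentiable.mpr hu).eq_of_frequently_eq
    (analyticOnNhd_univ_iff_differentiable.mpr hv)
    (hofReal.frequently (h.filter_mono nhdsWithin_le_nhds).frequently)

theorem LocallyLipschitz.eq_of_hasDerivAt_smul {E : Type*} [NormedAddCommGroup E]
    [NormedSpace ℂ E] [CompleteSpace E] {V : E → E} (hV : LocallyLipschitz V) {a : ℂ → ℂ}
    (ha : ContinuousAt a 0) {c₁ c₂ : ℂ → E} (h₁ : ∀ s, HasDerivAt c₁ (a s • V (c₁ s)) s)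
    (h₂ : ∀ s, HasDerivAt c₂ (a s • V (c₂ s)) s) (h : c₁ 0 = c₂ 0) : c₁ = c₂ :=
  Differentiable.eq_of_eventuallyEq_ofReal (fun s => (h₁ s).differentiableAt)
    (fun s => (h₂ s).differentiableAt)
    (hV.eventuallyEq_of_hasDerivAt_smul (ha.comp_of_eq continuous_ofReal.continuousAt ofReal_zero)
      (fun t => by simpa [comp_def] using (h₁ t).scomp t (hasDerivAt_id t).ofReal_comp)
      (fun t => by simpa [comp_def] using (h₂ t).scomp t (hasDerivAt_id t).ofReal_comp)
      (by simpa using h))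

theorem LocallyLipschitz.flow_apply_eq_self_of_eq_zero {E : Type*} [NormedAddCommGroup E]
    [NormedSpace ℂ E] [CompleteSpace E] {X : E → E} (hX : LocallyLipschitz X)
    {ψ : ℂ → E → E} (hψ0 : ∀ z, ψ 0 z = z)
    (hψode : ∀ t z, HasDerivAt (fun s => ψ s z) (X (ψ t z)) t) {p : E} (hp : X p = 0) (t : ℂ) :
    ψ t p = p :=
  congrFun (hX.eq_of_hasDerivAt_smul (a := fun _ => 1) (c₂ := fun _ => p) continuousAt_const
    (fun s => by simpa using hψode s p) (fun s => by simpa [hp] using hasDerivAt_const s p)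
    (hψ0 p)) t

theorem Differentiable.dslope_zero {g : ℂ → ℂ} (hg : Differentiable ℂ g) :
    Differentiable ℂ (dslope g 0) :=
  differentiableOn_univ.mp ((Complex.differentiableOn_dslope univ_mem).mpr hg.differentiableOn)

theorem Differentiable.apply_eq_apply_zero_of_ne_zero_of_norm_le {g : ℂ → ℂ}
    (hg : Differentiable ℂ g) (hg0 : ∀ z, g z ≠ 0) {C : ℝ}
    (hC : ∀ z, 1 ≤ ‖z‖ → ‖g z‖ ≤ C * ‖z‖) (z : ℂ) : g z = g 0 := by
  -- linear growth bounds `dslope g 0`, so `g` is affine by Liouville; zero-free forces constant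
  obtain ⟨M, hM⟩ := (isCompact_closedBall (0 : ℂ) 1).exists_bound_of_continuousOn
    hg.dslope_zero.continuous.continuousOn
  have hbdd : ∀ z, ‖dslope g 0 z‖ ≤ max M (C + ‖g 0‖) := by
    intro z
    rcases le_or_gt ‖z‖ 1 with hz | hz
    · exact le_max_of_le_left (hM z (by simpa using hz))
    have hz0 : 0 < ‖z‖ := by linarith
    rw [dslope_of_ne _ (norm_pos_iff.mp hz0), slope_def_field, sub_zero, norm_div,
      div_le_iff₀ hz0]
    calc ‖g z - g 0‖ ≤ C * ‖z‖ + ‖g 0‖ * ‖z‖ := by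
          have := hC z hz.le
          nlinarith [norm_sub_le (g z) (g 0), norm_nonneg (g 0)]
      _ ≤ max M (C + ‖g 0‖) * ‖z‖ := by rw [← add_mul]; gcongr; exact le_max_right _ _
  have hslope : ∀ z, dslope g 0 z = dslope g 0 0 := fun z =>
    hg.dslope_zero.apply_eq_apply_of_bounded
      (isBounded_iff_forall_norm_le.mpr ⟨_, forall_mem_range.mpr hbdd⟩) z 0
  have haffine : ∀ z, g z = g 0 + z * dslope g 0 0 := fun z => by
    linear_combination -(sub_smul_dslope g 0 z) + z * hslope z
  have hk : dslope g 0 0 = 0 := by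
    by_contra hk
    exact hg0 (-g 0 / dslope g 0 0) (by rw [haffine]; field_simp; ring)
  rw [haffine, hk, mul_zero, add_zero]

theorem Differentiable.eq_add_mul_of_injective {f : ℂ → ℂ} (hf : Differentiable ℂ f)
    (hinj : Injective f) {a : ℂ} (ha : HasDerivAt f a 0) (ha0 : a ≠ 0) (z : ℂ) :
    f z = f 0 + z * a := by
  have hnhds : f '' ball 0 1 ∈ 𝓝 (f 0) := by
    have hstrict : HasStrictDerivAt f a 0 := by
      simpa [ha.deriv] using (hf.analyticAt 0).hasStrictDerivAt
    rw [← hstrict.map_nhds_eq ha0]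
    exact image_mem_map (ball_mem_nhds 0 one_pos)
  obtain ⟨δ, hδ, hball⟩ := Metric.mem_nhds_iff.mp hnhds
  have hfar : ∀ z, 1 ≤ ‖z‖ → δ ≤ ‖f z - f 0‖ := by
    intro z hz
    by_contra! hlt
    obtain ⟨w, hw, hwz⟩ := hball (mem_ball_iff_norm.mpr hlt)
    rw [hinj hwz, mem_ball_zero_iff] at hw
    linarith
  have hD0 : dslope f 0 0 = a := by rw [dslope_same, ha.deriv]
  have hD : ∀ z, dslope f 0 z ≠ 0 := by
    intro z
    rcases eq_or_ne z 0 with rfl | hz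
    · rwa [hD0]
    rw [dslope_of_ne _ hz, slope_def_field]
    exact div_ne_zero (sub_ne_zero.mpr (hinj.ne hz)) (sub_ne_zero.mpr hz)
  -- `1 / dslope f 0` is entire, zero-free and of linear growth, hence constant
  have hinv := (show Differentiable ℂ fun z => (dslope f 0 z)⁻¹ from
    hf.dslope_zero.inv hD).apply_eq_apply_zero_of_ne_zero_of_norm_le
    (fun z => inv_ne_zero (hD z)) (C := δ⁻¹) fun z hz => by
      have hz0 : z ≠ 0 := norm_pos_iff.mp (by linarith)
      rw [dslope_of_ne _ hz0, slope_def_field, sub_zero, norm_inv, norm_div, inv_div,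
        inv_mul_eq_div]
      exact div_le_div_of_nonneg_left (norm_nonneg z) hδ (hfar z hz)
  have hslope : dslope f 0 z = a := by rw [← hD0]; exact inv_inj.mp (hinv z)
  linear_combination -(sub_smul_dslope f 0 z) + z * hslope

theorem Differentiable.not_injective_of_forall_ne {f : ℂ → ℂ} (hf : Differentiable ℂ f)
    {a : ℂ} (ha : HasDerivAt f a 0) (ha0 : a ≠ 0) {c : ℂ} (hc : ∀ z, f z ≠ c) :
    ¬Injective f := fun hinj =>
  hc ((c - f 0) / a) (by rw [hf.eq_add_mul_of_injective hinj ha ha0]; field_simp; ring)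

theorem type_Cstar_of_noninvariant_zero_set_general
    (Y : ℂ × ℂ → ℂ × ℂ) (f : ℂ × ℂ → ℂ)
    (hY : Differentiable ℂ Y) (hf : Differentiable ℂ f)
    (φ ψ : ℂ → ℂ × ℂ → ℂ × ℂ)
    (hφ0 : ∀ z, φ 0 z = z)
    (hφode : ∀ t z, HasDerivAt (fun s => φ s z) (Y (φ t z)) t)
    (hψ0 : ∀ z, ψ 0 z = z)
    (hψgroup : ∀ s t z, ψ (s + t) z = ψ s (ψ t z))
    (hψode : ∀ t z, HasDerivAt (fun s => ψ s z) (f (ψ t z) • Y (ψ t z)) t)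
    (z₀ : ℂ × ℂ) (hz₀ : f z₀ = 0) :
    ∀ t₀ : ℂ, f (φ t₀ z₀) ≠ 0 →
      (∀ s : ℂ, ψ s (φ t₀ z₀) ≠ z₀) ∧
      ∃ T : ℂ, T ≠ 0 ∧ ∀ s : ℂ, ψ (s + T) (φ t₀ z₀) = ψ s (φ t₀ z₀) := by
  intro t₀ ht₀
  set w := φ t₀ z₀
  have hψw : Differentiable ℂ fun s => ψ s w := fun s => (hψode s w).differentiableAt
  have hfψ : ∀ s, f (ψ s w) ≠ 0 := by
    intro s hs
    have hfix : ψ (-s) (ψ s w) = ψ s w :=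
      (hf.smul hY).locallyLipschitz_s10.flow_apply_eq_self_of_eq_zero hψ0 hψode (by simp [hs]) (-s)
    rw [← hψgroup, neg_add_cancel, hψ0] at hfix
    exact ht₀ (hfix ▸ hs)
  obtain ⟨τ, hτ0, hτ⟩ := (hf.comp hψw).isExactOn_univ.with_val_at 0 t₀
  have hconj : ∀ s, ψ s w = φ (τ s) z₀ := congrFun <|
    hY.locallyLipschitz_s10.eq_of_hasDerivAt_smul (hf.comp hψw).continuous.continuousAt
      (hψode · w) (fun s => (hφode (τ s) z₀).scomp s (hτ s trivial)) (by simp [hψ0, hτ0, w])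
  have hτne : ∀ s, τ s ≠ 0 := fun s h => hfψ s (by rw [hconj, h, hφ0, hz₀])
  obtain ⟨A, B, hAB, hne⟩ := not_injective_iff.mp <|
    Differentiable.not_injective_of_forall_ne (fun s => (hτ s trivial).differentiableAt)
      (by simpa [hψ0] using hτ 0 trivial) ht₀ hτne
  refine ⟨fun s h => hfψ s (by rw [h, hz₀]), A - B, sub_ne_zero.mpr hne, fun s => ?_⟩
  rw [show s + (A - B) = s - B + A by ring, hψgroup, hconj A, hAB, ← hconj B, ← hψgroup,
    sub_add_cancel]

/-- Let `X = f·Y` be complete on `ℂ²` (with flow `ψ`) where `Y` is complete with flow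
`φ`.  Suppose `{f = 0}` is nonempty and not invariant by `Y`: there is `z₀` with
`f z₀ = 0` whose `Y`-trajectory is not contained in `{f = 0}` and meets it only at an
isolated time.  Then every nonconstant `X`-trajectory through a nearby point
`w = φ t₀ z₀` of that `Y`-trajectory (with `f w ≠ 0`) omits the value `z₀`, and is of
type `ℂ*`: the solution of `X` through `w` is periodic with some nonzero period. -/
theorem type_Cstar_of_noninvariant_zero_set
    (Y : ℂ × ℂ → ℂ × ℂ) (f : ℂ × ℂ → ℂ)
    (hY : Differentiable ℂ Y) (hf : Differentiable ℂ f)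
    (φ ψ : ℂ → ℂ × ℂ → ℂ × ℂ)
    (hφ0 : ∀ z, φ 0 z = z)
    (hφode : ∀ t z, HasDerivAt (fun s => φ s z) (Y (φ t z)) t)
    (hψ0 : ∀ z, ψ 0 z = z)
    (hψgroup : ∀ s t z, ψ (s + t) z = ψ s (ψ t z))
    (hψode : ∀ t z, HasDerivAt (fun s => ψ s z) (f (ψ t z) • Y (ψ t z)) t)
    (z₀ : ℂ × ℂ) (hz₀ : f z₀ = 0) (hYz₀ : Y z₀ ≠ 0)
    (hisolated : ∀ᶠ t in nhdsWithin (0 : ℂ) {0}ᶜ, f (φ t z₀) ≠ 0) :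
    ∀ t₀ : ℂ, f (φ t₀ z₀) ≠ 0 →
      (∀ s : ℂ, ψ s (φ t₀ z₀) ≠ z₀) ∧
      ∃ T : ℂ, T ≠ 0 ∧ ∀ s : ℂ, ψ (s + T) (φ t₀ z₀) = ψ s (φ t₀ z₀) :=
  type_Cstar_of_noninvariant_zero_set_general Y f hY hf φ ψ hφ0 hφode hψ0 hψgroup hψode z₀ hz₀
end
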